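/- Let G be a group, k ≥ 1, and let ψ : FreeGroup (Fin k × Fin 2) →* G be an injective group homomorphism whose range J is a malnormal subgroup of G. For each i ∈ Fin k let H_i be the subgroup of G generated by the two elements ψ(FreeGroup.of (i, 0)) and ψ(FreeGroup.of (i, 1)). Then (H_i)_{i ∈ Fin k} is a malnormal collection in G: for all i, j ∈ Fin k and all g ∈ G, if g H_i g⁻¹ ∩ H_j ≠ {1}, then i = j and g ∈ H_i. -/

import Mathlib

/-- The conjugate subgroup `g H g⁻¹`. -/
def conjSubgroup {G : Type*} [Group G] (g : G) (H : Subgroup G) : Subgroup G :=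
  H.map (MulAut.conj g).toMonoidHom

/-- A subgroup `H` of `G` is malnormal if `g H g⁻¹ ∩ H ≠ {1}` implies `g ∈ H`. -/
def IsMalnormal {G : Type*} [Group G] (H : Subgroup G) : Prop :=
  ∀ g : G, conjSubgroup g H ⊓ H ≠ ⊥ → g ∈ H

/-- A family of subgroups is a malnormal collection if
`g H i g⁻¹ ∩ H j ≠ {1}` implies `i = j` and `g ∈ H i`. -/
def IsMalnormalCollection {G : Type*} [Group G] {ι : Type*} (H : ι → Subgroup G) : Prop :=
  ∀ (i j : ι) (g : G), conjSubgroup g (H i) ⊓ H j ≠ ⊥ → i = j ∧ g ∈ H i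

/-!
Pulling back along `ψ`, which is injective with malnormal range, reduces the claim to the free
group on the pairs `(i, e)`. There, the subgroup generated by a set `s` of letters is malnormal:
write `g = g' m` with `m ∈ ⟨s⟩` and the last letter of `g'` outside `s`; for `1 ≠ u ∈ ⟨s⟩` the
word `g' · (m u m⁻¹) · g'⁻¹` is reduced as written, so it has a letter outside `s` unless
`g' = 1`. For disjoint `s` and `t`, the retraction onto `⟨t⟩` killing all other letters has a
normal kernel containing `⟨s⟩` and meeting `⟨t⟩` trivially, so no conjugate of `⟨s⟩` meets `⟨t⟩`.
-/

section Conjugation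

variable {G G' : Type*} [Group G] [Group G']

theorem conjSubgroup_inf_ne_bot_iff {g : G} {H K : Subgroup G} :
    conjSubgroup g H ⊓ K ≠ ⊥ ↔ ∃ u ∈ H, g * u * g⁻¹ ∈ K ∧ u ≠ 1 := by
  simp [Subgroup.ne_bot_iff_exists_ne_one, conjSubgroup, MulAut.conj_apply, and_assoc]

theorem conjSubgroup_mono {g : G} {H K : Subgroup G} (h : H ≤ K) :
    conjSubgroup g H ≤ conjSubgroup g K :=
  Subgroup.map_mono h

theorem conjSubgroup_le_of_le_normal {g : G} {H N : Subgroup G} [N.Normal] (h : H ≤ N) :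
    conjSubgroup g H ≤ N := by
  rintro _ ⟨u, hu, rfl⟩
  exact ‹N.Normal›.conj_mem u (h hu) g

theorem map_conjSubgroup (f : G →* G') (g : G) (H : Subgroup G) :
    (conjSubgroup g H).map f = conjSubgroup (f g) (H.map f) := by
  ext x
  simp [conjSubgroup, MulAut.conj_apply]

theorem IsMalnormalCollection.map {F : Type*} [Group F] {ι : Type*} {K : ι → Subgroup F}
    (hK : IsMalnormalCollection K) {ψ : F →* G} (hψ : Function.Injective ψ)
    (hJ : IsMalnormal ψ.range) : IsMalnormalCollection fun i => (K i).map ψ := by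
  intro i j g hg
  obtain ⟨w, rfl⟩ : g ∈ ψ.range := hJ g <| ne_bot_of_le_ne_bot hg <|
    inf_le_inf (conjSubgroup_mono (Subgroup.map_le_range ψ _)) (Subgroup.map_le_range ψ _)
  rw [← map_conjSubgroup, ← Subgroup.map_inf_eq _ _ _ hψ, Ne,
    Subgroup.map_eq_bot_iff_of_injective _ hψ] at hg
  exact (hK i j w hg).imp_right (Subgroup.mem_map_of_mem ψ)

end Conjugation

namespace FreeGroup

open Function Subgroup

variable {α : Type*} {s t : Set α}

theorem mk_mem_closure_image_of {L : List (α × Bool)} (h : ∀ p ∈ L, p.1 ∈ s) :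
    mk L ∈ closure (of '' s) := by
  rw [← lift_of_apply (mk L), lift_mk]
  refine list_prod_mem fun _ hx => ?_
  obtain ⟨p, hp, rfl⟩ := List.mem_map.mp hx
  have hof : of p.1 ∈ closure (of '' s) := subset_closure (Set.mem_image_of_mem of (h p hp))
  cases p.2
  · exact inv_mem hof
  · exact hof

theorem mem_closure_image_of_iff [DecidableEq α] {x : FreeGroup α} :
    x ∈ closure (of '' s) ↔ ∀ p ∈ x.toWord, p.1 ∈ s := by
  refine ⟨fun hx => ?_, fun h => mk_toWord (x := x) ▸ mk_mem_closure_image_of h⟩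
  induction hx using closure_induction with
  | mem _ ha =>
    obtain ⟨a, ha, rfl⟩ := ha
    simpa [toWord_of] using ha
  | one => simp
  | mul x y _ _ hx hy =>
    intro p hp
    rcases List.mem_append.mp ((toWord_mul_sublist x y).subset hp) with hp | hp
    exacts [hx p hp, hy p hp]
  | inv x _ hx =>
    intro p hp
    simp only [toWord_inv, invRev, List.mem_reverse, List.mem_map] at hp
    obtain ⟨q, hq, rfl⟩ := hp
    exact hx q hq

theorem toWord_mk_mul_mul_inv_mk [DecidableEq α] {L : List (α × Bool)} (hL : IsReduced L)
    {a : α × Bool} (ha : L.getLast? = some a) (has : a.1 ∉ s) {u : FreeGroup α}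
    (hu : u ∈ closure (of '' s)) (hu1 : u ≠ 1) :
    (mk L * u * (mk L)⁻¹).toWord = L ++ u.toWord ++ invRev L := by
  have hus := mem_closure_image_of_iff.mp hu
  have hU : u.toWord ≠ [] := mt toWord_eq_nil_iff.mp hu1
  have hLinv : IsReduced (invRev L) := by
    rw [isReduced_iff_reduce_eq, reduce_invRev, hL.reduce_eq]
  have hred : IsReduced (L ++ u.toWord ++ invRev L) := by
    refine List.isChain_append.mpr ⟨List.isChain_append.mpr ⟨hL, isReduced_toWord, ?_⟩, hLinv, ?_⟩
    · rintro x hx y hy hxy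
      rw [ha, Option.mem_some_iff] at hx
      exact absurd (hus y (List.mem_of_mem_head? hy)) (hxy ▸ hx ▸ has)
    · rintro x hx y hy hxy
      rw [List.getLast?_append_of_ne_nil _ hU] at hx
      simp only [invRev, List.head?_reverse, List.getLast?_map, ha, Option.map_some,
        Option.mem_some_iff] at hy
      exact absurd (hus x (List.mem_of_mem_getLast? hx)) (hxy ▸ hy ▸ has)
  rw [← hred.reduce_eq, ← toWord_mk, ← mul_mk, ← mul_mk, mk_toWord, inv_mk]

theorem isMalnormal_closure_image_of (s : Set α) : IsMalnormal (closure (of '' s)) := by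
  classical
  intro g hg
  obtain ⟨u, hu, hgu, hu1⟩ := conjSubgroup_inf_ne_bot_iff.mp hg
  set L := g.toWord.rdropWhile (fun p => p.1 ∈ s)
  set M := g.toWord.rtakeWhile (fun p => p.1 ∈ s)
  have hg_eq : g = mk L * mk M := by
    rw [mul_mk, List.rdropWhile_append_rtakeWhile, mk_toWord]
  have hM : mk M ∈ closure (of '' s) :=
    mk_mem_closure_image_of fun p hp => by simpa using List.mem_rtakeWhile_imp hp
  rw [hg_eq]
  refine mul_mem ?_ hM
  by_cases hL : L = []
  · rw [hL, ← one_eq_mk]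
    exact one_mem _
  exfalso
  have has : (L.getLast hL).1 ∉ s := by simpa using List.rdropWhile_last_not _ _ hL
  have hconj : g * u * g⁻¹ = mk L * (mk M * u * (mk M)⁻¹) * (mk L)⁻¹ := by
    rw [hg_eq]; group
  have hword := toWord_mk_mul_mul_inv_mk
    (isReduced_toWord.infix (List.rdropWhile_prefix _ _).isInfix)
    (List.getLast?_eq_some_getLast hL) has
    (mul_mem (mul_mem hM hu) (inv_mem hM)) (mt conj_eq_one_iff.mp hu1)
  rw [← hconj] at hword
  refine has (mem_closure_image_of_iff.mp hgu _ ?_)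
  rw [hword]
  exact List.mem_append_left _ (List.mem_append_left _ (List.getLast_mem hL))

theorem conjSubgroup_closure_image_of_inf_eq_bot (hst : Disjoint s t) (g : FreeGroup α) :
    conjSubgroup g (closure (of '' s)) ⊓ closure (of '' t) = ⊥ := by
  classical
  let r : FreeGroup α →* FreeGroup α := lift fun a => if a ∈ t then of a else 1
  have hs : closure (of '' s) ≤ r.ker := by
    rw [closure_le]
    rintro _ ⟨a, ha, rfl⟩
    simp [r, Set.disjoint_left.mp hst ha]
  have ht : closure (of '' t) ≤ r.eqLocus (MonoidHom.id _) := by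
    rw [closure_le]
    rintro _ ⟨a, ha, rfl⟩
    show r (of a) = of a
    simp [r, ha]
  rw [eq_bot_iff]
  rintro x ⟨hxs, hxt⟩
  have hx : r x = 1 := conjSubgroup_le_of_le_normal hs hxs
  exact (ht hxt).symm.trans hx

theorem isMalnormalCollection_closure_image_of {ι : Type*} {s : ι → Set α}
    (hs : Pairwise (Disjoint on s)) : IsMalnormalCollection fun i => closure (of '' s i) := by
  intro i j g hg
  by_cases hij : i = j
  · subst hij
    exact ⟨rfl, isMalnormal_closure_image_of (s i) g hg⟩
  · exact absurd (conjSubgroup_closure_image_of_inf_eq_bot (hs hij) g) hg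

end FreeGroup

theorem pairs_malnormalCollection_general {G : Type*} [Group G] (k : ℕ)
    (ψ : FreeGroup (Fin k × Fin 2) →* G) (hψ : Function.Injective ψ)
    (hJ : IsMalnormal ψ.range) :
    IsMalnormalCollection
      (fun i : Fin k => Subgroup.closure
        {ψ (FreeGroup.of (i, 0)), ψ (FreeGroup.of (i, 1))}) := by
  have hpairs := FreeGroup.isMalnormalCollection_closure_image_of
    (s := fun i : Fin k => ({(i, 0), (i, 1)} : Set (Fin k × Fin 2)))
    fun i j hij => by simp [Function.onFun, hij.symm]
  simpa only [MonoidHom.map_closure, Set.image_pair] using hpairs.map hψ hJ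

/-- If `J = ⟨a₁, b₁, …, a_k, b_k⟩` is a malnormal free subgroup of `G` with free basis
the `aᵢ, bᵢ`, then the two-generator subgroups `H i = ⟨aᵢ, bᵢ⟩` form a malnormal
collection in `G`. -/
theorem pairs_malnormalCollection {G : Type*} [Group G] (k : ℕ) (hk : 1 ≤ k)
    (ψ : FreeGroup (Fin k × Fin 2) →* G) (hψ : Function.Injective ψ)
    (hJ : IsMalnormal ψ.range) :
    IsMalnormalCollection
      (fun i : Fin k => Subgroup.closure
        {ψ (FreeGroup.of (i, 0)), ψ (FreeGroup.of (i, 1))}) :=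
  pairs_malnormalCollection_general k ψ hψ hJ
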